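/- Let A_K ∈ ℝ^{n×n}, E ∈ ℝ^{n×1}, C ∈ ℝ^{1×n} with C ≠ 0, and P ∈ ℝ^{n×n} symmetric positive definite. The following are equivalent: (i) for all w ∈ ℝ and all nonzero x ∈ ℝ^n with w(w − Cx) ≤ 0, one has (A_Kx + Ew)ᵀP(A_Kx + Ew) − xᵀPx < 0; (ii) there exists α ≥ 0 such that [[P − A_KᵀPA_K, −A_KᵀPE],[−EᵀPA_K, −EᵀPE]] − α[[0, ½Cᵀ],[½C, −1]] is positive definite. -/

import Mathlib

/-!
Write `z = (x, w)`, `M₁` for the Lyapunov block matrix and `M₂` for the sector block matrix, so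
that `M₁[z]` is the Lyapunov decrease and `M₂[z] = w (C x - w)`. Since `M₂[(0, w)] = -w²`, the
condition `x ≠ 0` may be replaced by `z ≠ 0`, and the decrease condition says `M₁[z] > 0` whenever
`z ≠ 0` and `M₂[z] ≥ 0`; as `C ≠ 0`, `M₂` takes a positive value. The strict S-lemma then
produces `α ≥ 0` with `M₁ - α M₂` positive definite.

For the S-lemma, suppose no `α ≥ 0` works. The multipliers `α ≥ 0` admitting a unit vector `z`
with `(M₁ - α M₂)[z] ≤ 0` and `M₂[z] ≥ 0`, resp. `M₂[z] ≤ 0`, form two closed sets (by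
compactness of the sphere) covering `[0, ∞)`, the first containing large `α`, the second `0`.
By connectedness some `α` lies in both. Its two witnesses have `M₂` of strictly opposite signs,
and after flipping the sign of one of them the cross term of `M₁ - α M₂` is nonpositive, so on
the segment between them the intermediate value theorem yields `z ≠ 0` with `M₂[z] = 0` and
`M₁[z] ≤ 0`, a contradiction.
-/

open Matrix Set

lemma isClosed_setOf_exists_mem_compact {X Y : Type*} [TopologicalSpace X] [TopologicalSpace Y]
    {K : Set X} (hK : IsCompact K) {s : Set (Y × X)} (hs : IsClosed s) :
    IsClosed {y | ∃ x ∈ K, (y, x) ∈ s} := by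
  have := isCompact_iff_compactSpace.mp hK
  convert isClosedMap_fst_of_compactSpace (X := Y) (Y := K) _
    (hs.preimage (continuous_fst.prodMk (continuous_subtype_val.comp continuous_snd)))
  ext y
  simp

section QuadraticForm

variable {ι : Type*} [Fintype ι]

lemma smul_dotProduct_mulVec_smul (M : Matrix ι ι ℝ) (c : ℝ) (z : ι → ℝ) :
    (c • z) ⬝ᵥ (M *ᵥ (c • z)) = c ^ 2 * (z ⬝ᵥ (M *ᵥ z)) := by
  simp only [mulVec_smul, dotProduct_smul, smul_dotProduct, smul_eq_mul]; ring

lemma neg_dotProduct_mulVec_neg (M : Matrix ι ι ℝ) (z : ι → ℝ) :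
    (-z) ⬝ᵥ (M *ᵥ -z) = z ⬝ᵥ (M *ᵥ z) := by
  simp only [mulVec_neg, neg_dotProduct, dotProduct_neg, neg_neg]

lemma smul_add_smul_dotProduct_mulVec (M : Matrix ι ι ℝ) (a b : ℝ) (u v : ι → ℝ) :
    (a • u + b • v) ⬝ᵥ (M *ᵥ (a • u + b • v)) =
      a ^ 2 * (u ⬝ᵥ (M *ᵥ u)) + a * b * (u ⬝ᵥ (M *ᵥ v) + v ⬝ᵥ (M *ᵥ u))
        + b ^ 2 * (v ⬝ᵥ (M *ᵥ v)) := by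
  simp only [mulVec_add, mulVec_smul, add_dotProduct, dotProduct_add, smul_dotProduct,
    dotProduct_smul, smul_eq_mul]
  ring

lemma dotProduct_sub_smul_mulVec (N S : Matrix ι ι ℝ) (α : ℝ) (z : ι → ℝ) :
    z ⬝ᵥ ((N - α • S) *ᵥ z) = z ⬝ᵥ (N *ᵥ z) - α * (z ⬝ᵥ (S *ᵥ z)) := by
  rw [sub_mulVec, dotProduct_sub, smul_mulVec, dotProduct_smul, smul_eq_mul]

lemma Matrix.IsHermitian.posDef_iff_forall_dotProduct_mulVec_pos {M : Matrix ι ι ℝ}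
    (hM : M.IsHermitian) : M.PosDef ↔ ∀ z ≠ 0, 0 < z ⬝ᵥ (M *ᵥ z) := by
  simp only [posDef_iff_dotProduct_mulVec, hM, true_and, star_trivial]

lemma exists_ne_zero_isotropic_nonpos_of_cross_nonpos (Q S : Matrix ι ι ℝ) {u v : ι → ℝ}
    (hSu : 0 < u ⬝ᵥ (S *ᵥ u)) (hSv : v ⬝ᵥ (S *ᵥ v) < 0)
    (hQu : u ⬝ᵥ (Q *ᵥ u) ≤ 0) (hQv : v ⬝ᵥ (Q *ᵥ v) ≤ 0)
    (hcross : u ⬝ᵥ (Q *ᵥ v) + v ⬝ᵥ (Q *ᵥ u) ≤ 0) :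
    ∃ z ≠ 0, z ⬝ᵥ (S *ᵥ z) = 0 ∧ z ⬝ᵥ (Q *ᵥ z) ≤ 0 := by
  set ζ : ℝ → ι → ℝ := fun t => (1 - t) • u + t • v
  have hζ0 : ζ 0 = u := by simp [ζ]
  have hζ1 : ζ 1 = v := by simp [ζ]
  obtain ⟨t, ⟨ht0, ht1⟩, hSt⟩ : ∃ t ∈ Icc (0 : ℝ) 1, ζ t ⬝ᵥ (S *ᵥ ζ t) = 0 := by
    refine intermediate_value_Icc' zero_le_one (by fun_prop : Continuous fun t =>
      ζ t ⬝ᵥ (S *ᵥ ζ t)).continuousOn ?_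
    rw [hζ0, hζ1]
    exact ⟨hSv.le, hSu.le⟩
  have ht1' : t ≠ 1 := by rintro rfl; rw [hζ1] at hSt; exact hSv.ne hSt
  refine ⟨ζ t, fun h => ?_, hSt, ?_⟩
  -- `ζ t = 0` would give `(1 - t)² S[u] = t² S[v]`, with the sides of opposite signs.
  · have h' : (1 - t) • u = (-t) • v := by
      rw [neg_smul, eq_neg_iff_add_eq_zero]; exact h
    have := congrArg (fun z => z ⬝ᵥ (S *ᵥ z)) h'
    simp only [smul_dotProduct_mulVec_smul, neg_sq] at this
    have : 0 < (1 - t) ^ 2 := by have := sub_ne_zero.2 ht1'.symm; positivity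
    nlinarith [mul_nonneg (sq_nonneg t) (neg_nonneg.2 hSv.le)]
  · rw [smul_add_smul_dotProduct_mulVec]
    nlinarith [mul_nonpos_of_nonneg_of_nonpos (sq_nonneg (1 - t)) hQu,
      mul_nonpos_of_nonneg_of_nonpos (sq_nonneg t) hQv,
      mul_nonpos_of_nonneg_of_nonpos (mul_nonneg (sub_nonneg.2 ht1) ht0) hcross]

lemma exists_ne_zero_isotropic_nonpos (Q S : Matrix ι ι ℝ) {u v : ι → ℝ}
    (hSu : 0 < u ⬝ᵥ (S *ᵥ u)) (hSv : v ⬝ᵥ (S *ᵥ v) < 0)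
    (hQu : u ⬝ᵥ (Q *ᵥ u) ≤ 0) (hQv : v ⬝ᵥ (Q *ᵥ v) ≤ 0) :
    ∃ z ≠ 0, z ⬝ᵥ (S *ᵥ z) = 0 ∧ z ⬝ᵥ (Q *ᵥ z) ≤ 0 := by
  rcases le_total (u ⬝ᵥ (Q *ᵥ v) + v ⬝ᵥ (Q *ᵥ u)) 0 with hcross | hcross
  · exact exists_ne_zero_isotropic_nonpos_of_cross_nonpos Q S hSu hSv hQu hQv hcross
  · refine exists_ne_zero_isotropic_nonpos_of_cross_nonpos Q S (v := -v) hSu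
      (by rwa [neg_dotProduct_mulVec_neg]) hQu (by rwa [neg_dotProduct_mulVec_neg]) ?_
    simp only [mulVec_neg, dotProduct_neg, neg_dotProduct]
    linarith

end QuadraticForm

section SLemma

variable {ι : Type*} [Fintype ι]

lemma exists_mem_unitSphere_dotProduct_mulVec_eq_mul {z : ι → ℝ} (hz : z ≠ 0) :
    ∃ y ∈ Metric.sphere (0 : ι → ℝ) 1, ∃ c > (0 : ℝ),
      ∀ M : Matrix ι ι ℝ, y ⬝ᵥ (M *ᵥ y) = c * (z ⬝ᵥ (M *ᵥ z)) := by
  have hz' : ‖z‖ ≠ 0 := norm_ne_zero_iff.2 hz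
  refine ⟨‖z‖⁻¹ • z, ?_, ‖z‖⁻¹ ^ 2, by positivity, fun M => smul_dotProduct_mulVec_smul M _ z⟩
  rw [mem_sphere_zero_iff_norm, norm_smul, norm_inv, norm_norm, inv_mul_cancel₀ hz']

lemma isClosed_setOf_exists_mem_unitSphere_sub_mul_nonpos (N S : Matrix ι ι ℝ) {T : Set ℝ}
    (hT : IsClosed T) :
    IsClosed {α : ℝ | ∃ z ∈ Metric.sphere (0 : ι → ℝ) 1,
      z ⬝ᵥ (S *ᵥ z) ∈ T ∧ z ⬝ᵥ (N *ᵥ z) - α * (z ⬝ᵥ (S *ᵥ z)) ≤ 0} := by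
  have hS : Continuous fun p : ℝ × (ι → ℝ) => p.2 ⬝ᵥ (S *ᵥ p.2) := by fun_prop
  have hQ : Continuous fun p : ℝ × (ι → ℝ) =>
      p.2 ⬝ᵥ (N *ᵥ p.2) - p.1 * (p.2 ⬝ᵥ (S *ᵥ p.2)) := by
    fun_prop
  exact isClosed_setOf_exists_mem_compact (isCompact_sphere 0 1)
    ((hT.preimage hS).inter (isClosed_le hQ continuous_const))

lemma exists_pos_neg_of_forall_exists_sub_smul_nonpos (N S : Matrix ι ι ℝ) {z₀ : ι → ℝ}
    (hz₀ : 0 < z₀ ⬝ᵥ (S *ᵥ z₀))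
    (hNS : ∀ z ≠ 0, 0 ≤ z ⬝ᵥ (S *ᵥ z) → 0 < z ⬝ᵥ (N *ᵥ z))
    (hbad : ∀ α : ℝ, 0 ≤ α → ∃ z ≠ 0, z ⬝ᵥ ((N - α • S) *ᵥ z) ≤ 0) :
    ∃ α : ℝ, ∃ u v : ι → ℝ, 0 < u ⬝ᵥ (S *ᵥ u) ∧ v ⬝ᵥ (S *ᵥ v) < 0 ∧
      u ⬝ᵥ ((N - α • S) *ᵥ u) ≤ 0 ∧ v ⬝ᵥ ((N - α • S) *ᵥ v) ≤ 0 := by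
  simp_rw [dotProduct_sub_smul_mulVec] at hbad ⊢
  set K := Metric.sphere (0 : ι → ℝ) 1
  have hK : ∀ z ∈ K, z ≠ 0 := fun z hz => ne_zero_of_mem_sphere one_ne_zero ⟨z, hz⟩
  set U := {α | ∃ z ∈ K, z ⬝ᵥ (S *ᵥ z) ∈ Ici 0 ∧ z ⬝ᵥ (N *ᵥ z) - α * (z ⬝ᵥ (S *ᵥ z)) ≤ 0}
  set L := {α | ∃ z ∈ K, z ⬝ᵥ (S *ᵥ z) ∈ Iic 0 ∧ z ⬝ᵥ (N *ᵥ z) - α * (z ⬝ᵥ (S *ᵥ z)) ≤ 0}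
  have hcover : Ici 0 ⊆ U ∪ L := by
    intro α hα
    obtain ⟨z, hz, hNz⟩ := hbad α hα
    obtain ⟨y, hyK, c, hc, hy⟩ := exists_mem_unitSphere_dotProduct_mulVec_eq_mul hz
    have hNy : y ⬝ᵥ (N *ᵥ y) - α * (y ⬝ᵥ (S *ᵥ y)) ≤ 0 := by
      rw [hy, hy]; nlinarith
    rcases le_total 0 (y ⬝ᵥ (S *ᵥ y)) with hSy | hSy
    exacts [Or.inl ⟨y, hyK, hSy, hNy⟩, Or.inr ⟨y, hyK, hSy, hNy⟩]
  have hU_ne : (Ici 0 ∩ U).Nonempty := by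
    obtain ⟨y, hyK, c, hc, hy⟩ := exists_mem_unitSphere_dotProduct_mulVec_eq_mul (z := z₀)
      (by rintro rfl; simp at hz₀)
    have hSy : 0 < y ⬝ᵥ (S *ᵥ y) := by rw [hy]; positivity
    refine ⟨max 0 (y ⬝ᵥ (N *ᵥ y) / y ⬝ᵥ (S *ᵥ y)), mem_Ici.2 (le_max_left _ _), y, hyK,
      hSy.le, ?_⟩
    have := (div_le_iff₀ hSy).1 (le_max_right 0 (y ⬝ᵥ (N *ᵥ y) / y ⬝ᵥ (S *ᵥ y)))
    linarith
  have hL_ne : (Ici 0 ∩ L).Nonempty := by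
    refine ⟨0, self_mem_Ici, (hcover self_mem_Ici).resolve_left ?_⟩
    rintro ⟨z, hzK, hSz, hNz⟩
    have := hNS z (hK z hzK) hSz
    simp only [zero_mul, sub_zero] at hNz
    linarith
  obtain ⟨α, -, ⟨u, huK, hSu, hQu⟩, ⟨v, hvK, hSv, hQv⟩⟩ := isPreconnected_closed_iff.1
    isPreconnected_Ici U L (isClosed_setOf_exists_mem_unitSphere_sub_mul_nonpos N S isClosed_Ici)
    (isClosed_setOf_exists_mem_unitSphere_sub_mul_nonpos N S isClosed_Iic) hcover hU_ne hL_ne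
  have anisotropic : ∀ z ∈ K, z ⬝ᵥ (N *ᵥ z) - α * (z ⬝ᵥ (S *ᵥ z)) ≤ 0 →
      z ⬝ᵥ (S *ᵥ z) ≠ 0 := by
    intro z hzK hQz hSz
    have := hNS z (hK z hzK) hSz.ge
    rw [hSz, mul_zero, sub_zero] at hQz
    linarith
  exact ⟨α, u, v, lt_of_le_of_ne hSu (anisotropic u huK hQu).symm,
    lt_of_le_of_ne hSv (anisotropic v hvK hQv), hQu, hQv⟩

theorem exists_nonneg_forall_pos_sub_smul (N S : Matrix ι ι ℝ) {z₀ : ι → ℝ}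
    (hz₀ : 0 < z₀ ⬝ᵥ (S *ᵥ z₀))
    (hNS : ∀ z ≠ 0, 0 ≤ z ⬝ᵥ (S *ᵥ z) → 0 < z ⬝ᵥ (N *ᵥ z)) :
    ∃ α : ℝ, 0 ≤ α ∧ ∀ z ≠ 0, 0 < z ⬝ᵥ ((N - α • S) *ᵥ z) := by
  by_contra! hbad
  obtain ⟨α, u, v, hSu, hSv, hQu, hQv⟩ :=
    exists_pos_neg_of_forall_exists_sub_smul_nonpos N S hz₀ hNS hbad
  obtain ⟨z, hz, hSz, hQz⟩ := exists_ne_zero_isotropic_nonpos (N - α • S) S hSu hSv hQu hQv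
  rw [dotProduct_sub_smul_mulVec, hSz, mul_zero, sub_zero] at hQz
  exact (hQz.trans_lt (hNS z hz hSz.ge)).false

theorem strict_s_lemma (N S : Matrix ι ι ℝ) {z₀ : ι → ℝ} (hz₀ : 0 < z₀ ⬝ᵥ (S *ᵥ z₀)) :
    (∀ z ≠ 0, 0 ≤ z ⬝ᵥ (S *ᵥ z) → 0 < z ⬝ᵥ (N *ᵥ z)) ↔
      ∃ α : ℝ, 0 ≤ α ∧ ∀ z ≠ 0, 0 < z ⬝ᵥ ((N - α • S) *ᵥ z) := by
  refine ⟨exists_nonneg_forall_pos_sub_smul N S hz₀, ?_⟩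
  rintro ⟨α, hα, hpos⟩ z hz hSz
  have := hpos z hz
  rw [dotProduct_sub_smul_mulVec] at this
  nlinarith

end SLemma

section Blocks

variable {ι κ : Type*}

lemma sumElim_dotProduct_fromBlocks_mulVec [Fintype ι] [Fintype κ] (A : Matrix ι ι ℝ)
    (B : Matrix ι κ ℝ) (C : Matrix κ ι ℝ) (D : Matrix κ κ ℝ) (x : ι → ℝ) (y : κ → ℝ) :
    Sum.elim x y ⬝ᵥ (fromBlocks A B C D *ᵥ Sum.elim x y) =
      x ⬝ᵥ (A *ᵥ x) + x ⬝ᵥ (B *ᵥ y) + y ⬝ᵥ (C *ᵥ x) + y ⬝ᵥ (D *ᵥ y) := by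
  rw [fromBlocks_mulVec, sumElim_dotProduct_sumElim, Sum.elim_comp_inl, Sum.elim_comp_inr,
    dotProduct_add, dotProduct_add]
  ring

def lyapunovBlock [Fintype ι] (AK : Matrix ι ι ℝ) (E : Matrix ι κ ℝ) (P : Matrix ι ι ℝ) :
    Matrix (ι ⊕ κ) (ι ⊕ κ) ℝ :=
  fromBlocks (P - AKᵀ * P * AK) (-(AKᵀ * P * E)) (-(Eᵀ * P * AK)) (-(Eᵀ * P * E))

noncomputable def sectorBlock (C : Matrix (Fin 1) ι ℝ) : Matrix (ι ⊕ Fin 1) (ι ⊕ Fin 1) ℝ :=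
  fromBlocks 0 ((1/2 : ℝ) • Cᵀ) ((1/2 : ℝ) • C) (-(1 : Matrix (Fin 1) (Fin 1) ℝ))

lemma sumElim_dotProduct_lyapunovBlock_mulVec [Fintype ι] [Fintype κ] (AK : Matrix ι ι ℝ)
    (E : Matrix ι κ ℝ) (P : Matrix ι ι ℝ) (x : ι → ℝ) (v : κ → ℝ) :
    Sum.elim x v ⬝ᵥ (lyapunovBlock AK E P *ᵥ Sum.elim x v) =
      x ⬝ᵥ (P *ᵥ x) - (AK *ᵥ x + E *ᵥ v) ⬝ᵥ (P *ᵥ (AK *ᵥ x + E *ᵥ v)) := by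
  simp only [lyapunovBlock, sumElim_dotProduct_fromBlocks_mulVec, sub_mulVec, neg_mulVec,
    ← mulVec_mulVec, dotProduct_sub, dotProduct_neg, mulVec_add, dotProduct_add, add_dotProduct,
    dotProduct_mulVec _ (Matrix.transpose _), vecMul_transpose]
  ring

lemma sumElim_dotProduct_sectorBlock_mulVec [Fintype ι] (C : Matrix (Fin 1) ι ℝ) (x : ι → ℝ)
    (w : ℝ) :
    Sum.elim x (fun _ => w) ⬝ᵥ (sectorBlock C *ᵥ Sum.elim x (fun _ => w)) =
      w * ((C *ᵥ x) 0 - w) := by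
  simp only [sectorBlock, sumElim_dotProduct_fromBlocks_mulVec, zero_mulVec, dotProduct_zero,
    smul_mulVec, dotProduct_smul, neg_mulVec, one_mulVec, dotProduct_neg, smul_eq_mul,
    dotProduct_mulVec _ Cᵀ, vecMul_transpose]
  simp only [dotProduct, Fin.sum_univ_one]
  ring

lemma isHermitian_lyapunovBlock [Fintype ι] (AK : Matrix ι ι ℝ) (E : Matrix ι κ ℝ)
    {P : Matrix ι ι ℝ} (hP : P.IsHermitian) : (lyapunovBlock AK E P).IsHermitian := by
  have hPt : Pᵀ = P := hP
  rw [IsHermitian, conjTranspose_eq_transpose_of_trivial, lyapunovBlock, fromBlocks_transpose]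
  simp only [transpose_sub, transpose_neg, transpose_mul, transpose_transpose, hPt,
    Matrix.mul_assoc]

lemma isHermitian_sectorBlock (C : Matrix (Fin 1) ι ℝ) : (sectorBlock C).IsHermitian := by
  rw [IsHermitian, conjTranspose_eq_transpose_of_trivial, sectorBlock, fromBlocks_transpose]
  simp only [transpose_zero, transpose_smul, transpose_transpose, transpose_neg, transpose_one]

end Blocks

section AbsoluteStability

variable {ι : Type*} [Fintype ι]

lemma exists_pos_sectorBlock {C : Matrix (Fin 1) ι ℝ} (hC : C ≠ 0) :
    ∃ z, 0 < z ⬝ᵥ (sectorBlock C *ᵥ z) := by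
  obtain ⟨x, hx⟩ : ∃ x, C *ᵥ x ≠ 0 := by
    by_contra! h
    exact hC (ext_iff_mulVec.2 fun x => by rw [h x, zero_mulVec])
  have hCx : (C *ᵥ x) 0 ≠ 0 := fun h0 => hx (funext fun i => by rwa [Fin.fin_one_eq_zero i])
  refine ⟨Sum.elim x fun _ => (C *ᵥ x) 0 / 2, ?_⟩
  rw [sumElim_dotProduct_sectorBlock_mulVec]
  nlinarith [sq_pos_of_ne_zero hCx]

lemma forall_sector_lyapunov_decrease_iff (AK : Matrix ι ι ℝ) (E : Matrix ι (Fin 1) ℝ)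
    (C : Matrix (Fin 1) ι ℝ) (P : Matrix ι ι ℝ) :
    (∀ (w : ℝ) (x : ι → ℝ), x ≠ 0 → w * (w - (C *ᵥ x) 0) ≤ 0 →
        (AK *ᵥ x + E *ᵥ (fun _ => w)) ⬝ᵥ (P *ᵥ (AK *ᵥ x + E *ᵥ (fun _ => w))) -
          x ⬝ᵥ (P *ᵥ x) < 0) ↔
      ∀ z ≠ 0, 0 ≤ z ⬝ᵥ (sectorBlock C *ᵥ z) → 0 < z ⬝ᵥ (lyapunovBlock AK E P *ᵥ z) := by
  constructor
  · intro h z hz hsector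
    obtain ⟨x, w, rfl⟩ : ∃ x w, z = Sum.elim x fun _ : Fin 1 => w :=
      ⟨z ∘ Sum.inl, z (Sum.inr 0), by ext (i | i) <;> simp [Fin.fin_one_eq_zero]⟩
    rw [sumElim_dotProduct_sectorBlock_mulVec] at hsector
    rw [sumElim_dotProduct_lyapunovBlock_mulVec]
    have hx : x ≠ 0 := by
      rintro rfl
      have hw : w = 0 := by simp only [mulVec_zero, Pi.zero_apply] at hsector; nlinarith
      exact hz (by ext (i | i) <;> simp [hw])
    have := h w x hx (by linarith)
    linarith
  · intro h w x hx hsector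
    have hz : Sum.elim x (fun _ : Fin 1 => w) ≠ 0 := fun h0 =>
      hx (funext fun i => congrFun h0 (.inl i))
    have := h _ hz (by rw [sumElim_dotProduct_sectorBlock_mulVec]; linarith)
    rw [sumElim_dotProduct_lyapunovBlock_mulVec] at this
    linarith

end AbsoluteStability

/-- Absolute stability characterization (Section V): via the classical S-lemma,
the Lyapunov decrease along the sector constraint is equivalent to an LMI. -/
theorem absolute_stability_characterization {n : ℕ}
    (AK : Matrix (Fin n) (Fin n) ℝ) (E : Matrix (Fin n) (Fin 1) ℝ)
    (C : Matrix (Fin 1) (Fin n) ℝ) (P : Matrix (Fin n) (Fin n) ℝ)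
    (hC : C ≠ 0) (hP : P.PosDef) :
    (∀ (w : ℝ) (x : Fin n → ℝ), x ≠ 0 → w * (w - (C *ᵥ x) 0) ≤ 0 →
        (AK *ᵥ x + E *ᵥ (fun _ => w)) ⬝ᵥ (P *ᵥ (AK *ᵥ x + E *ᵥ (fun _ => w))) -
          x ⬝ᵥ (P *ᵥ x) < 0) ↔
      ∃ α : ℝ, 0 ≤ α ∧
        (fromBlocks (P - AKᵀ * P * AK) (-(AKᵀ * P * E))
            (-(Eᵀ * P * AK)) (-(Eᵀ * P * E)) -
          α • fromBlocks (0 : Matrix (Fin n) (Fin n) ℝ)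
            ((1/2 : ℝ) • Cᵀ) ((1/2 : ℝ) • C)
            (-(1 : Matrix (Fin 1) (Fin 1) ℝ))).PosDef := by
  obtain ⟨z₀, hz₀⟩ := exists_pos_sectorBlock hC
  have hermitian (α : ℝ) : (lyapunovBlock AK E P - α • sectorBlock C).IsHermitian :=
    (isHermitian_lyapunovBlock AK E hP.isHermitian).sub
      ((isHermitian_sectorBlock C).smul (IsSelfAdjoint.all α))
  calc _ ↔ _ := forall_sector_lyapunov_decrease_iff AK E C P
    _ ↔ _ := strict_s_lemma _ _ hz₀
    _ ↔ _ := exists_congr fun α => and_congr_right fun _ =>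
      (hermitian α).posDef_iff_forall_dotProduct_mulVec_pos.symm
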